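/- Let 0 < α < 1. The topological closure of the conic hull of the set {(x, ε, x^(α/(α−1))) : x > 0, ε ∈ {1,−1}} ⊆ ℝ³ equals the power cone K_α. -/

import Mathlib

open Real

/-- The power cone `K_α = {(x₁,x₂,x₃) : x₁ ≥ 0, x₃ ≥ 0, x₁^α·x₃^(1−α) ≥ |x₂|}`
(real powers are `Real.rpow`). -/
def Kpow (α : ℝ) : Set (Fin 3 → ℝ) :=
  {x | 0 ≤ x 0 ∧ 0 ≤ x 2 ∧ |x 1| ≤ x 0 ^ α * x 2 ^ (1 - α)}

/-- The conic hull of a set `S ⊆ ℝ³`: all finite nonnegative linear combinations of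
elements of `S`. -/
def conicHull (S : Set (Fin 3 → ℝ)) : Set (Fin 3 → ℝ) :=
  {p | ∃ (n : ℕ) (c : Fin n → ℝ) (v : Fin n → (Fin 3 → ℝ)),
    (∀ i, 0 ≤ c i) ∧ (∀ i, v i ∈ S) ∧ p = ∑ i, c i • v i}

/-! Both curve points `(x, ±1, x^(α/(α-1)))` lie on the surface `x₁^α x₃^(1-α) = 1`, and `K_α` is a
closed convex cone (closure under addition is Hölder's inequality with exponents `1/α`, `1/(1-α)`),
so the closed conic hull lies in `K_α`. Conversely, if `a, d > 0` and `|b| ≤ M := a^α d^(1-α)`, then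
with `x = (a/d)^(1-α)` one has `M x = a` and `M x^(α/(α-1)) = d`, so
`(a, b, d) = (M+b)/2 • (x, 1, x^(α/(α-1))) + (M-b)/2 • (x, -1, x^(α/(α-1)))`;
every point of `K_α` is the limit of such points `(a + t, b, d + t)` as `t → 0⁺`. -/

open Filter Topology

section RpowMean

variable {α a d : ℝ}

lemma rpow_mul_rpow_one_sub_self (ha : 0 ≤ a) : a ^ α * a ^ (1 - α) = a := by
  rw [← rpow_add' ha (by simp), add_sub_cancel, rpow_one]

lemma mul_rpow_mul_mul_rpow {c : ℝ} (hc : 0 ≤ c) (ha : 0 ≤ a) (hd : 0 ≤ d) :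
    (c * a) ^ α * (c * d) ^ (1 - α) = c * (a ^ α * d ^ (1 - α)) := by
  rw [mul_rpow hc ha, mul_rpow hc hd]
  calc _ = c ^ α * c ^ (1 - α) * (a ^ α * d ^ (1 - α)) := by ring
    _ = _ := by rw [rpow_mul_rpow_one_sub_self hc]

lemma rpow_mul_rpow_add_rpow_mul_rpow_le (hα0 : 0 < α) (hα1 : α < 1) {a₁ d₁ a₂ d₂ : ℝ}
    (ha₁ : 0 ≤ a₁) (hd₁ : 0 ≤ d₁) (ha₂ : 0 ≤ a₂) (hd₂ : 0 ≤ d₂) :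
    a₁ ^ α * d₁ ^ (1 - α) + a₂ ^ α * d₂ ^ (1 - α) ≤ (a₁ + a₂) ^ α * (d₁ + d₂) ^ (1 - α) := by
  have hpq : α⁻¹.HolderConjugate (1 - α)⁻¹ :=
    .inv_inv hα0 (sub_pos.2 hα1) (add_sub_cancel α 1)
  have := inner_le_Lp_mul_Lq_of_nonneg Finset.univ hpq (f := ![a₁ ^ α, a₂ ^ α])
    (g := ![d₁ ^ (1 - α), d₂ ^ (1 - α)]) (fun i _ ↦ by fin_cases i <;> simp [rpow_nonneg, *])
    (fun i _ ↦ by fin_cases i <;> simp [rpow_nonneg, *])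
  simpa [Fin.sum_univ_two, rpow_rpow_inv, ha₁, hd₁, ha₂, hd₂, hα0.ne', (sub_pos.2 hα1).ne']
    using this

end RpowMean

section PowerCone

variable {α : ℝ}

lemma isClosed_Kpow (hα0 : 0 ≤ α) (hα1 : α ≤ 1) : IsClosed (Kpow α) :=
  (isClosed_le continuous_const (continuous_apply 0)).inter <|
    (isClosed_le continuous_const (continuous_apply 2)).inter <|
      isClosed_le (continuous_apply 1).abs <|
        ((continuous_rpow_const hα0).comp (continuous_apply 0)).mul
          ((continuous_rpow_const (sub_nonneg.2 hα1)).comp (continuous_apply 2))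

lemma zero_mem_Kpow (α : ℝ) : (0 : Fin 3 → ℝ) ∈ Kpow α := by
  simpa [Kpow] using (rpow_mul_rpow_one_sub_self (α := α) le_rfl).ge

lemma add_mem_Kpow (hα0 : 0 < α) (hα1 : α < 1) {p q : Fin 3 → ℝ}
    (hp : p ∈ Kpow α) (hq : q ∈ Kpow α) : p + q ∈ Kpow α := by
  obtain ⟨hp0, hp2, hp1⟩ := hp
  obtain ⟨hq0, hq2, hq1⟩ := hq
  refine ⟨add_nonneg hp0 hq0, add_nonneg hp2 hq2, ?_⟩
  calc |p 1 + q 1| ≤ |p 1| + |q 1| := abs_add_le _ _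
    _ ≤ p 0 ^ α * p 2 ^ (1 - α) + q 0 ^ α * q 2 ^ (1 - α) := add_le_add hp1 hq1
    _ ≤ (p 0 + q 0) ^ α * (p 2 + q 2) ^ (1 - α) :=
      rpow_mul_rpow_add_rpow_mul_rpow_le hα0 hα1 hp0 hp2 hq0 hq2

lemma smul_mem_Kpow {c : ℝ} (hc : 0 ≤ c) {p : Fin 3 → ℝ} (hp : p ∈ Kpow α) :
    c • p ∈ Kpow α := by
  obtain ⟨hp0, hp2, hp1⟩ := hp
  refine ⟨mul_nonneg hc hp0, mul_nonneg hc hp2, ?_⟩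
  simp only [Pi.smul_apply, smul_eq_mul, abs_mul, abs_of_nonneg hc,
    mul_rpow_mul_mul_rpow hc hp0 hp2]
  exact mul_le_mul_of_nonneg_left hp1 hc

def powerCone (hα0 : 0 < α) (hα1 : α < 1) : PointedCone ℝ (Fin 3 → ℝ) where
  carrier := Kpow α
  add_mem' := add_mem_Kpow hα0 hα1
  zero_mem' := zero_mem_Kpow α
  smul_mem' c _ hp := smul_mem_Kpow c.2 hp

end PowerCone

section ConicHull

variable {S : Set (Fin 3 → ℝ)}

lemma conicHull_subset {C : PointedCone ℝ (Fin 3 → ℝ)} (hS : S ⊆ C) : conicHull S ⊆ C := by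
  rintro _ ⟨n, c, v, hc, hv, rfl⟩
  exact Submodule.sum_mem _ fun i _ ↦ C.smul_mem (hc i) (hS (hv i))

lemma smul_add_smul_mem_conicHull {c₁ c₂ : ℝ} {v₁ v₂ : Fin 3 → ℝ} (hc₁ : 0 ≤ c₁) (hc₂ : 0 ≤ c₂)
    (hv₁ : v₁ ∈ S) (hv₂ : v₂ ∈ S) : c₁ • v₁ + c₂ • v₂ ∈ conicHull S :=
  ⟨2, ![c₁, c₂], ![v₁, v₂], by simp [Fin.forall_fin_two, hc₁, hc₂],
    by simp [Fin.forall_fin_two, hv₁, hv₂], by simp [Fin.sum_univ_two]⟩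

end ConicHull

section PowCurve

variable {α : ℝ}

def powCurve (α : ℝ) : Set (Fin 3 → ℝ) :=
  {p : Fin 3 → ℝ | ∃ x : ℝ, 0 < x ∧ ∃ ε : ℝ, (ε = 1 ∨ ε = -1) ∧
    p = ![x, ε, x ^ (α / (α - 1))]}

lemma rpow_mul_rpow_div_sub_one {x : ℝ} (hx : 0 < x) (hα1 : α ≠ 1) :
    x ^ α * (x ^ (α / (α - 1))) ^ (1 - α) = 1 := by
  have hexp : α + α / (α - 1) * (1 - α) = 0 := by
    field_simp [sub_ne_zero.2 hα1]
    ring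
  rw [← rpow_mul hx.le, ← rpow_add hx, hexp, rpow_zero]

lemma powCurve_subset_Kpow (hα1 : α ≠ 1) : powCurve α ⊆ Kpow α := by
  rintro _ ⟨x, hx, ε, hε, rfl⟩
  refine ⟨hx.le, (rpow_pos_of_pos hx _).le, ?_⟩
  change |ε| ≤ x ^ α * (x ^ (α / (α - 1))) ^ (1 - α)
  rw [rpow_mul_rpow_div_sub_one hx hα1]
  rcases hε with rfl | rfl <;> simp

lemma geomMean_mul_rpow_eq (hα1 : α ≠ 1) {a d : ℝ} (ha : 0 < a) (hd : 0 < d) :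
    a ^ α * d ^ (1 - α) * (a / d) ^ (1 - α) = a ∧
      a ^ α * d ^ (1 - α) * ((a / d) ^ (1 - α)) ^ (α / (α - 1)) = d := by
  have hexp : (1 - α) * (α / (α - 1)) = -α := by
    field_simp [sub_ne_zero.2 hα1]
    ring
  have ha' := (rpow_pos_of_pos ha α).ne'
  have hd' := (rpow_pos_of_pos hd (1 - α)).ne'
  constructor
  · calc _ = a ^ α * a ^ (1 - α) := by rw [div_rpow ha.le hd.le]; field_simp
      _ = a := rpow_mul_rpow_one_sub_self ha.le
  · calc _ = d ^ α * d ^ (1 - α) := by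
          rw [← rpow_mul (div_pos ha hd).le, hexp, rpow_neg (div_pos ha hd).le, ← inv_rpow
            (div_pos ha hd).le, inv_div, div_rpow hd.le ha.le]
          field_simp
      _ = d := rpow_mul_rpow_one_sub_self hd.le

lemma mem_conicHull_powCurve_of_pos (hα1 : α ≠ 1) {p : Fin 3 → ℝ} (hp : p ∈ Kpow α)
    (hp0 : 0 < p 0) (hp2 : 0 < p 2) : p ∈ conicHull (powCurve α) := by
  set M := p 0 ^ α * p 2 ^ (1 - α)
  set x := (p 0 / p 2) ^ (1 - α)
  obtain ⟨hMx, hMx'⟩ := geomMean_mul_rpow_eq hα1 hp0 hp2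
  have hx : 0 < x := rpow_pos_of_pos (div_pos hp0 hp2) _
  obtain ⟨hb_lower, hb_upper⟩ := abs_le.1 hp.2.2
  have hsplit : p = ((M + p 1) / 2) • ![x, 1, x ^ (α / (α - 1))] +
      ((M - p 1) / 2) • ![x, -1, x ^ (α / (α - 1))] := by
    ext i
    fin_cases i <;>
      simp only [Fin.zero_eta, Fin.mk_one, Fin.reduceFinMk, Pi.add_apply, Pi.smul_apply,
        smul_eq_mul, Matrix.cons_val_zero, Matrix.cons_val_one, Matrix.cons_val_two,
        Matrix.tail_cons, Matrix.head_cons] <;>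
      linarith
  rw [hsplit]
  exact smul_add_smul_mem_conicHull (by linarith) (by linarith)
    ⟨x, hx, 1, .inl rfl, rfl⟩ ⟨x, hx, -1, .inr rfl, rfl⟩

lemma Kpow_subset_closure_setOf_pos (hα0 : 0 ≤ α) (hα1 : α ≤ 1) :
    Kpow α ⊆ closure {p ∈ Kpow α | 0 < p 0 ∧ 0 < p 2} := by
  rintro p ⟨hp0, hp2, hp1⟩
  have hlim : Tendsto (fun t : ℝ ↦ p + t • (![1, 0, 1] : Fin 3 → ℝ)) (𝓝[>] 0) (𝓝 p) :=
    ((continuous_const.add (continuous_id.smul continuous_const)).tendsto' 0 p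
      (by simp)).mono_left nhdsWithin_le_nhds
  refine mem_closure_of_tendsto hlim (eventually_mem_nhdsWithin.mono fun t (ht : 0 < t) ↦ ?_)
  have h0 : 0 < p 0 + t := by linarith
  have h2 : 0 < p 2 + t := by linarith
  simp only [Kpow, Set.mem_ofPred_eq, Pi.add_apply, Pi.smul_apply, smul_eq_mul,
    Matrix.cons_val_zero, Matrix.cons_val_one, Matrix.cons_val_two, Matrix.tail_cons,
    Matrix.head_cons, mul_one, mul_zero, add_zero]
  have hα1' : 0 ≤ 1 - α := sub_nonneg.2 hα1
  exact ⟨⟨h0.le, h2.le, hp1.trans (by gcongr <;> linarith)⟩, h0, h2⟩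

end PowCurve

/-- For `0 < α < 1`, the closure of the conic hull of
`{(x, ε, x^(α/(α−1))) : x > 0, ε ∈ {1,−1}}` is the power cone `K_α`. -/
theorem closure_conicHull_powCurve_eq_Kpow (α : ℝ) (hα0 : 0 < α) (hα1 : α < 1) :
    closure (conicHull
      {p : Fin 3 → ℝ | ∃ x : ℝ, 0 < x ∧ ∃ ε : ℝ, (ε = 1 ∨ ε = -1) ∧
        p = ![x, ε, x ^ (α / (α - 1))]}) = Kpow α := by
  refine (closure_minimal ?_ (isClosed_Kpow hα0.le hα1.le)).antisymm
    ((Kpow_subset_closure_setOf_pos hα0.le hα1.le).trans (closure_mono ?_))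
  · exact conicHull_subset (C := powerCone hα0 hα1) (powCurve_subset_Kpow hα1.ne)
  · exact fun p hp ↦ mem_conicHull_powCurve_of_pos hα1.ne hp.1 hp.2.1 hp.2.2
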